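/- Let x, y ∈ ℝ^d be fixed. Then x ⊕_s y tends to x + y as s → ∞; that is, the function s ↦ x ⊕_s y (defined for all s > max(‖x‖, ‖y‖)) converges to x + y along the filter of s tending to infinity. -/

import Mathlib

open Real MeasureTheory

/-- Inverse hyperbolic tangent on `(-1, 1)`. -/
noncomputable def Real.artanh' (x : ℝ) : ℝ := (1 / 2) * Real.log ((1 + x) / (1 - x))

/-- Matrix-vector multiplication viewed as a map between Euclidean spaces. -/
noncomputable def mulVecE {d d' : ℕ} (P : Matrix (Fin d') (Fin d) ℝ)
    (x : EuclideanSpace ℝ (Fin d)) : EuclideanSpace ℝ (Fin d') :=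
  (EuclideanSpace.equiv (Fin d') ℝ).symm (P.mulVec (EuclideanSpace.equiv (Fin d) ℝ x))

/-- Möbius matrix multiplication `P^{⊗_s} x` on the Poincaré ball of radius `s`.
When `P.mulVec x = 0` this evaluates to `0`, as required. -/
noncomputable def mobiusMat {d d' : ℕ} (s : ℝ) (P : Matrix (Fin d') (Fin d) ℝ)
    (x : EuclideanSpace ℝ (Fin d)) : EuclideanSpace ℝ (Fin d') :=
  (s * Real.tanh ((‖mulVecE P x‖ / ‖x‖) * Real.artanh' (‖x‖ / s)) / ‖mulVecE P x‖) • mulVecE P x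

/-- Frobenius norm of a real matrix. -/
noncomputable def frobNorm {m n : ℕ} (P : Matrix (Fin m) (Fin n) ℝ) : ℝ :=
  Real.sqrt (∑ i, ∑ j, (P i j) ^ 2)

/-- Lorentz gamma factor `γ_x = 1/√(1 - ‖x‖²/s²)`. -/
noncomputable def lorentzGamma {d : ℕ} (s : ℝ) (x : EuclideanSpace ℝ (Fin d)) : ℝ :=
  1 / Real.sqrt (1 - ‖x‖ ^ 2 / s ^ 2)

/-- Poincaré distance `d_s(x,y) = 2s·arsinh(γ_x γ_y ‖x - y‖ / s)`. -/
noncomputable def dPoin {d : ℕ} (s : ℝ) (x y : EuclideanSpace ℝ (Fin d)) : ℝ :=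
  2 * s * Real.arsinh (lorentzGamma s x * lorentzGamma s y * ‖x - y‖ / s)

/-- Möbius addition on the Poincaré ball of radius `s`. -/
noncomputable def mobiusAdd {d : ℕ} (s : ℝ) (x y : EuclideanSpace ℝ (Fin d)) :
    EuclideanSpace ℝ (Fin d) :=
  ((1 + 2 / s ^ 2 * (inner ℝ x y : ℝ) + 1 / s ^ 2 * ‖y‖ ^ 2) /
      (1 + 2 / s ^ 2 * (inner ℝ x y : ℝ) + 1 / s ^ 4 * ‖x‖ ^ 2 * ‖y‖ ^ 2)) • x +
    ((1 - 1 / s ^ 2 * ‖x‖ ^ 2) /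
      (1 + 2 / s ^ 2 * (inner ℝ x y : ℝ) + 1 / s ^ 4 * ‖x‖ ^ 2 * ‖y‖ ^ 2)) • y

/-- Exponential map at the origin of the Poincaré ball of radius `s`. -/
noncomputable def expZero {d : ℕ} (s : ℝ) (v : EuclideanSpace ℝ (Fin d)) :
    EuclideanSpace ℝ (Fin d) :=
  (s * Real.tanh (‖v‖ / s) / ‖v‖) • v

/-- Logarithmic map at the origin of the Poincaré ball of radius `s`. -/
noncomputable def logZero {d : ℕ} (s : ℝ) (y : EuclideanSpace ℝ (Fin d)) :
    EuclideanSpace ℝ (Fin d) :=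
  (s * Real.artanh' (‖y‖ / s) / ‖y‖) • y

/-! In the variable `t = 1 / s` the coefficients of `x ⊕_s y` are rational functions of `t`
whose denominator is `1` at `t = 0`, so `s ↦ x ⊕_s y` extends continuously to `s = ∞`, where
it is ordinary addition. -/

section
variable {d : ℕ} (x y : EuclideanSpace ℝ (Fin d))

/-- Since `0⁻¹ = 0` in Lean, every `1 / s ^ k` term vanishes at `s = 0⁻¹`: this is the radius `∞`. -/
theorem mobiusAdd_inv_zero : mobiusAdd (0 : ℝ)⁻¹ x y = x + y := by
  simp [mobiusAdd]

theorem continuousAt_mobiusAdd_inv : ContinuousAt (fun t : ℝ => mobiusAdd t⁻¹ x y) 0 := by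
  simp only [mobiusAdd, div_eq_mul_inv, inv_pow, inv_inv, one_mul]
  fun_prop (disch := simp)

end

/-- `x ⊕_s y → x + y` as `s → ∞`. -/
theorem stmt13 {d : ℕ} (x y : EuclideanSpace ℝ (Fin d)) :
    Filter.Tendsto (fun s : ℝ => mobiusAdd s x y) Filter.atTop (nhds (x + y)) := by
  have h := (continuousAt_mobiusAdd_inv x y).tendsto.comp tendsto_inv_atTop_zero
  simpa only [Function.comp_def, inv_inv, mobiusAdd_inv_zero] using h
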